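/- arXiv:math/0610726 — 5 statements merged into one kernel-verified Lean document; each statement's English description precedes it below -/
import Mathlib

section
/- Let R be a based ring with basis {X_i}_{i∈I}. Then the element I(1) := Σ_{i∈I} X_i X_{i*} is central in R. -/
/-- A *based ring* (fusion ring): an associative unital ring `R`, free of finite
rank as a `ℤ`-module with a distinguished basis `b : ι → R` indexed by a finite
type, such that all structure constants are nonnegative, the unit `1` is a basis
element, and there is an involution `star` of the index set for which the
induced linear map satisfies `(XY, Z) = (X, ZY*) = (Y, X*Z)` with respect to the
bilinear form making the basis orthonormal. -/
structure BasedRing (ι R : Type*) [Fintype ι] [DecidableEq ι] [Ring R] where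
  b : Module.Basis ι ℤ R
  unit : ι
  b_unit : b unit = 1
  star : ι → ι
  star_invol : ∀ i, star (star i) = i
  c_nonneg : ∀ i j k, 0 ≤ b.repr (b i * b j) k
  adj_right : ∀ i j k, b.repr (b i * b j) k = b.repr (b k * b (star j)) i
  adj_left : ∀ i j k, b.repr (b i * b j) k = b.repr (b (star i) * b k) j

namespace BasedRing

variable {ι R : Type*} [Fintype ι] [DecidableEq ι] [Ring R] (BR : BasedRing ι R)

/-- The element `I(1) = Σ_i X_i X_{i*}`. -/
noncomputable def I1 : R := ∑ i : ι, BR.b i * BR.b (BR.star i)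

end BasedRing

/-! Left and right multiplication by `I1` are `ℤ`-linear, so it suffices that `I1` commutes with
every basic element `X_j`. Expanding both `X_j · I1` and `I1 · X_j` in the basis gives the double
sums `Σ_{i,k} c_{ji}^k X_k X_{i*}` and `Σ_{k,i} c_{k*j}^{i*} X_k X_{i*}`, and the two Frobenius
reciprocity axioms give `c_{ji}^k = c_{k i*}^j = c_{k*j}^{i*}`. -/

open Finset

namespace Module.Basis

variable {ι S R : Type*} [Fintype ι] [CommSemiring S] [Semiring R] [Module S R]

theorem sum_repr_smul_basis_mul [IsScalarTower S R R] (b : Basis ι S R) (x y : R) :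
    ∑ k, b.repr x k • (b k * y) = x * y := by
  simp_rw [← smul_mul_assoc, ← sum_mul, b.sum_repr]

theorem sum_repr_smul_mul_basis [SMulCommClass S R R] (b : Basis ι S R) (x y : R) :
    ∑ k, b.repr x k • (y * b k) = y * x := by
  simp_rw [← mul_smul_comm, ← mul_sum, b.sum_repr]

end Module.Basis

namespace BasedRing

variable {ι R : Type*} [Fintype ι] [DecidableEq ι] [Ring R] (BR : BasedRing ι R)

theorem repr_mul_eq_repr_star_mul (i j k : ι) :
    BR.b.repr (BR.b j * BR.b i) k = BR.b.repr (BR.b (BR.star k) * BR.b j) (BR.star i) := by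
  rw [BR.adj_right j i k, BR.adj_left k (BR.star i) j]

theorem basis_mul_I1 (j : ι) :
    BR.b j * BR.I1 = ∑ k, ∑ i, BR.b.repr (BR.b j * BR.b i) k • (BR.b k * BR.b (BR.star i)) := by
  rw [I1, mul_sum, sum_comm]
  exact sum_congr rfl fun i _ => by
    rw [← mul_assoc, BR.b.sum_repr_smul_basis_mul]

theorem I1_mul_basis (j : ι) :
    BR.I1 * BR.b j =
      ∑ k, ∑ i, BR.b.repr (BR.b (BR.star k) * BR.b j) (BR.star i) • (BR.b k * BR.b (BR.star i)) := by
  rw [I1, sum_mul]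
  refine sum_congr rfl fun k _ => ?_
  rw [mul_assoc, ← BR.b.sum_repr_smul_mul_basis]
  exact (Equiv.sum_comp (Function.Involutive.toPerm _ BR.star_invol)
    fun m => BR.b.repr (BR.b (BR.star k) * BR.b j) m • (BR.b k * BR.b m)).symm

theorem commute_I1_basis (j : ι) : Commute BR.I1 (BR.b j) := by
  rw [Commute, SemiconjBy, basis_mul_I1, I1_mul_basis]
  exact sum_congr rfl fun k _ => sum_congr rfl fun i _ => by
    rw [BR.repr_mul_eq_repr_star_mul i j k]

end BasedRing

/-- In a based ring `R`, the element `I(1) = Σ_i X_i X_{i*}` is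
central in `R`. -/
theorem I1_central {ι R : Type*} [Fintype ι] [DecidableEq ι] [Ring R]
    (BR : BasedRing ι R) :
    ∀ x : R, BR.I1 * x = x * BR.I1 :=
  LinearMap.congr_fun <|
    BR.b.ext (f₁ := LinearMap.mulLeft ℤ BR.I1) (f₂ := LinearMap.mulRight ℤ BR.I1)
      BR.commute_I1_basis
end

section
/- Let R be a based ring with universal grading R = ⊕_{a∈U(R)} R_a, where the components R_a are spanned by the equivalence classes of the relation X ~ Y iff Y is contained in I(1)^n·X for some n ≥ 0. If R = ⊕_{g∈G} R^g is any grading of R by a group G, then the trivial component R^e contains R_ad; moreover, each universal component R_a is contained in R^{π(a)} for a unique π(a) ∈ G, the map π : U(R) → G is a group homomorphism, and π is surjective whenever the grading by G is faithful. (Thus every faithful grading of R arises from a quotient of U(R).) -/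
namespace BasedRing

variable {ι R : Type*} [Fintype ι] [DecidableEq ι] [Ring R] (BR : BasedRing ι R)

/-- `x` (with nonnegative coordinates) *contains* the basic element `k`. -/
def contains (x : R) (k : ι) : Prop := 0 < BR.b.repr x k

/-- Index set of the adjoint subring `R_ad`: basic elements contained in some
power `I(1)^n`, `n ≥ 1`. -/
def adBasis : Set ι := {k | ∃ n : ℕ, 1 ≤ n ∧ BR.contains (BR.I1 ^ n) k}

/-- The relation `X ~ Y` iff `Y` is contained in `I(1)^n · X` for some `n ≥ 0`,
whose classes are the components of the universal grading of `R`. -/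
def rel (i j : ι) : Prop := ∃ n : ℕ, BR.contains (BR.I1 ^ n * BR.b i) j

end BasedRing

lemma Fintype.exists_pos_of_sum_pos {α M : Type*} [Fintype α] [AddCommMonoid M]
    [LinearOrder M] [IsOrderedAddMonoid M] {f : α → M} (h : 0 < ∑ a, f a) : ∃ a, 0 < f a := by
  obtain ⟨a, -, ha⟩ := Finset.exists_lt_of_sum_lt (s := Finset.univ) (f := fun _ => (0 : M))
    (g := f) (by rwa [Finset.sum_const_zero])
  exact ⟨a, ha⟩

namespace BasedRing

variable {ι R : Type*} [Fintype ι] [DecidableEq ι] [Ring R] (BR : BasedRing ι R)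

def Nonneg (x : R) : Prop := ∀ k, 0 ≤ BR.b.repr x k

lemma contains_basis_iff {i k : ι} : BR.contains (BR.b i) k ↔ k = i := by
  rcases eq_or_ne k i with rfl | h
  · simp [contains]
  · simp [contains, h]

lemma contains_basis_self (i : ι) : BR.contains (BR.b i) i := BR.contains_basis_iff.mpr rfl

lemma contains_one_iff {k : ι} : BR.contains (1 : R) k ↔ k = BR.unit := by
  rw [← BR.b_unit, contains_basis_iff]

lemma contains_basis_mul_star_unit (i : ι) :
    BR.contains (BR.b i * BR.b (BR.star i)) BR.unit := by
  rw [contains, BR.adj_right, BR.star_invol, BR.b_unit, one_mul]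
  exact BR.contains_basis_self i

lemma nonneg_basis (i : ι) : BR.Nonneg (BR.b i) := by
  intro k
  rw [BR.b.repr_self]
  exact Finsupp.single_nonneg.mpr zero_le_one k

lemma nonneg_one : BR.Nonneg (1 : R) := BR.b_unit ▸ BR.nonneg_basis BR.unit

lemma repr_mul (x y : R) (k : ι) :
    BR.b.repr (x * y) k =
      ∑ p, ∑ q, BR.b.repr x p * BR.b.repr y q * BR.b.repr (BR.b p * BR.b q) k := by
  conv_lhs => rw [← BR.b.sum_repr x, ← BR.b.sum_repr y]
  simp only [Finset.sum_mul_sum, smul_mul_smul_comm, map_sum, map_zsmul,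
    Finsupp.finsetSum_apply, Finsupp.smul_apply, smul_eq_mul]

variable {BR} in
lemma Nonneg.mul {x y : R} (hx : BR.Nonneg x) (hy : BR.Nonneg y) : BR.Nonneg (x * y) := by
  intro k
  rw [BR.repr_mul]
  exact Finset.sum_nonneg fun p _ => Finset.sum_nonneg fun q _ =>
    mul_nonneg (mul_nonneg (hx p) (hy q)) (BR.c_nonneg p q k)

lemma nonneg_I1 : BR.Nonneg BR.I1 := by
  intro k
  rw [I1, map_sum, Finsupp.finsetSum_apply]
  exact Finset.sum_nonneg fun i _ => BR.c_nonneg i (BR.star i) k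

lemma nonneg_I1_pow (n : ℕ) : BR.Nonneg (BR.I1 ^ n) := by
  induction n with
  | zero => simpa using BR.nonneg_one
  | succ n ih => rw [pow_succ]; exact ih.mul BR.nonneg_I1

lemma exists_contains_of_contains_mul {x y : R} {k : ι} (hx : BR.Nonneg x) (hy : BR.Nonneg y)
    (h : BR.contains (x * y) k) :
    ∃ p q, BR.contains x p ∧ BR.contains y q ∧ BR.contains (BR.b p * BR.b q) k := by
  rw [contains, BR.repr_mul] at h
  obtain ⟨p, hp⟩ := Fintype.exists_pos_of_sum_pos h
  obtain ⟨q, hpq⟩ := Fintype.exists_pos_of_sum_pos hp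
  refine ⟨p, q, (hx p).lt_of_ne ?_, (hy q).lt_of_ne ?_, (BR.c_nonneg p q k).lt_of_ne ?_⟩ <;>
    rintro h0 <;> simp [← h0] at hpq

lemma contains_mul_of_contains {x y : R} {p q k : ι} (hx : BR.Nonneg x) (hy : BR.Nonneg y)
    (hp : BR.contains x p) (hq : BR.contains y q) (hk : BR.contains (BR.b p * BR.b q) k) :
    BR.contains (x * y) k := by
  rw [contains, BR.repr_mul]
  have hterms : ∀ p q, 0 ≤ BR.b.repr x p * BR.b.repr y q * BR.b.repr (BR.b p * BR.b q) k :=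
    fun p q => mul_nonneg (mul_nonneg (hx p) (hy q)) (BR.c_nonneg p q k)
  calc 0 < BR.b.repr x p * BR.b.repr y q * BR.b.repr (BR.b p * BR.b q) k :=
        mul_pos (mul_pos hp hq) hk
    _ ≤ ∑ q', BR.b.repr x p * BR.b.repr y q' * BR.b.repr (BR.b p * BR.b q') k :=
        Finset.single_le_sum (fun q' _ => hterms p q') (Finset.mem_univ q)
    _ ≤ _ := Finset.single_le_sum (f := fun p' => ∑ q', _)
        (fun p' _ => Finset.sum_nonneg fun q' _ => hterms p' q') (Finset.mem_univ p)

lemma exists_contains_of_contains_I1 {k : ι} (h : BR.contains BR.I1 k) :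
    ∃ i, BR.contains (BR.b i * BR.b (BR.star i)) k := by
  rw [contains, I1, map_sum, Finsupp.finsetSum_apply] at h
  exact Fintype.exists_pos_of_sum_pos h

/-- The coefficient of `X_i` in `X_i X_j X_{j*}` is at least `1`, so `X_i X_j ≠ 0`. -/
lemma exists_contains_basis_mul (i j : ι) : ∃ k, BR.contains (BR.b i * BR.b j) k := by
  have hi : BR.contains (BR.b i * BR.b j * BR.b (BR.star j)) i := by
    rw [mul_assoc]
    refine BR.contains_mul_of_contains (BR.nonneg_basis i)
      ((BR.nonneg_basis j).mul (BR.nonneg_basis _)) (BR.contains_basis_self i)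
      (BR.contains_basis_mul_star_unit j) ?_
    rw [BR.b_unit, mul_one]
    exact BR.contains_basis_self i
  obtain ⟨k, -, hk, -, -⟩ := BR.exists_contains_of_contains_mul
    ((BR.nonneg_basis i).mul (BR.nonneg_basis j)) (BR.nonneg_basis _) hi
  exact ⟨k, hk⟩

def IsGrading {G : Type*} [Mul G] (deg : ι → G) : Prop :=
  ∀ i j k, BR.contains (BR.b i * BR.b j) k → deg k = deg i * deg j

namespace IsGrading

variable {BR} {G : Type*} [Group G] {deg : ι → G}

lemma map_unit (hdeg : BR.IsGrading deg) : deg BR.unit = 1 := by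
  have h := hdeg BR.unit BR.unit BR.unit (by rw [BR.b_unit, mul_one, BR.contains_one_iff])
  exact left_eq_mul.mp h

lemma mul_map_star (hdeg : BR.IsGrading deg) (i : ι) : deg i * deg (BR.star i) = 1 :=
  (hdeg _ _ _ (BR.contains_basis_mul_star_unit i)).symm.trans hdeg.map_unit

lemma eq_one_of_contains_I1_pow (hdeg : BR.IsGrading deg) {n : ℕ} {k : ι}
    (h : BR.contains (BR.I1 ^ n) k) : deg k = 1 := by
  induction n generalizing k with
  | zero =>
    rw [pow_zero, BR.contains_one_iff] at h
    exact h ▸ hdeg.map_unit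
  | succ n ih =>
    rw [pow_succ] at h
    obtain ⟨p, q, hp, hq, hk⟩ :=
      BR.exists_contains_of_contains_mul (BR.nonneg_I1_pow n) BR.nonneg_I1 h
    obtain ⟨i, hi⟩ := BR.exists_contains_of_contains_I1 hq
    rw [hdeg _ _ _ hk, ih hp, hdeg _ _ _ hi, hdeg.mul_map_star, one_mul]

lemma eq_of_rel (hdeg : BR.IsGrading deg) {i j : ι} (h : BR.rel i j) : deg i = deg j := by
  obtain ⟨n, hn⟩ := h
  obtain ⟨p, q, hp, hq, hj⟩ :=
    BR.exists_contains_of_contains_mul (BR.nonneg_I1_pow n) (BR.nonneg_basis i) hn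
  rw [BR.contains_basis_iff.mp hq] at hj
  rw [hdeg _ _ _ hj, hdeg.eq_one_of_contains_I1_pow hp, one_mul]

lemma exists_monoidHom_comp_eq (hdeg : BR.IsGrading deg) {U : Type*} [Group U] {u : ι → U}
    (hu : BR.IsGrading u) (hu_surj : Function.Surjective u)
    (hu_rel : ∀ i j, u i = u j → BR.rel i j) :
    ∃ π : U →* G, ∀ i, deg i = π (u i) := by
  set s := Function.surjInv hu_surj
  have hs : ∀ i, deg (s (u i)) = deg i := fun i =>
    hdeg.eq_of_rel (hu_rel _ _ (Function.surjInv_eq hu_surj _))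
  refine ⟨MonoidHom.mk' (deg ∘ s) fun a b => ?_, fun i => (hs i).symm⟩
  obtain ⟨k, hk⟩ := BR.exists_contains_basis_mul (s a) (s b)
  have huk : u k = a * b := by
    rw [hu _ _ _ hk, Function.surjInv_eq hu_surj, Function.surjInv_eq hu_surj]
  simp only [Function.comp_apply, ← huk, hs, hdeg _ _ _ hk]

end IsGrading

end BasedRing

theorem grading_from_universal_general {ι R : Type*} [Fintype ι] [DecidableEq ι]
    [Ring R] (BR : BasedRing ι R) {G : Type*} [Group G] (deg : ι → G)
    (hdeg_mul : ∀ i j k, BR.contains (BR.b i * BR.b j) k → deg k = deg i * deg j)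
    {U : Type*} [Group U] (u : ι → U)
    (hu_surj : Function.Surjective u)
    (hu_rel : ∀ i j, BR.rel i j ↔ u i = u j)
    (hu_mul : ∀ i j k, BR.contains (BR.b i * BR.b j) k → u k = u i * u j) :
    (∀ i ∈ BR.adBasis, deg i = 1) ∧
    ∃ π : U →* G,
      (∀ i, deg i = π (u i)) ∧
      (∀ π' : U →* G, (∀ i, deg i = π' (u i)) → π' = π) ∧
      ((∀ g : G, ∃ i, deg i = g) → Function.Surjective π) := by
  have hdeg : BR.IsGrading deg := hdeg_mul
  obtain ⟨π, hπ⟩ := hdeg.exists_monoidHom_comp_eq hu_mul hu_surj fun i j => (hu_rel i j).mpr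
  refine ⟨fun i ⟨n, _, hi⟩ => hdeg.eq_one_of_contains_I1_pow hi, π, hπ, ?_, ?_⟩
  · intro π' hπ'
    ext a
    obtain ⟨i, rfl⟩ := hu_surj a
    rw [← hπ, ← hπ']
  · intro hfaithful g
    obtain ⟨i, rfl⟩ := hfaithful g
    exact ⟨u i, (hπ i).symm⟩

/-- Let `R = ⊕_{g∈G} R^g` be any grading of `R` by a group `G`
(given by the degree map `deg : ι → G` on basic elements, satisfying the
grading axioms), and let `u : ι → U` realize the universal grading of `R`
(so `U` is a group, `u` is surjective, its fibers are the classes of `~`, and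
`u` is multiplicative on constituents of products). Then the trivial component
contains `R_ad` (every basic element of `R_ad` has degree `1`), each universal
component lies in a single component `R^{π(a)}`, the resulting map
`π : U(R) → G` is the unique group homomorphism with `deg = π ∘ u`, and `π` is
surjective whenever the grading by `G` is faithful. Hence every faithful
grading of `R` arises from a quotient of `U(R)`. -/
theorem grading_from_universal {ι R : Type*} [Fintype ι] [DecidableEq ι]
    [Ring R] (BR : BasedRing ι R) {G : Type*} [Group G] (deg : ι → G)
    (hdeg_mul : ∀ i j k, BR.contains (BR.b i * BR.b j) k → deg k = deg i * deg j)
    (hdeg_star : ∀ i, deg (BR.star i) = (deg i)⁻¹)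
    {U : Type*} [Group U] (u : ι → U)
    (hu_surj : Function.Surjective u)
    (hu_rel : ∀ i j, BR.rel i j ↔ u i = u j)
    (hu_mul : ∀ i j k, BR.contains (BR.b i * BR.b j) k → u k = u i * u j) :
    (∀ i ∈ BR.adBasis, deg i = 1) ∧
    ∃ π : U →* G,
      (∀ i, deg i = π (u i)) ∧
      (∀ π' : U →* G, (∀ i, deg i = π' (u i)) → π' = π) ∧
      ((∀ g : G, ∃ i, deg i = g) → Function.Surjective π) :=
  grading_from_universal_general BR deg hdeg_mul u hu_surj hu_rel hu_mul
end

section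
/- Let R be a based ring such that FPdim(R) is an integer. Then FPdim(X)² is a positive integer for every basic X ∈ R, and there exist an elementary abelian 2-group E, distinct squarefree positive integers n_x for x ∈ E with n_{identity} = 1, and a faithful grading R = ⊕_{x∈E} R(n_x) such that FPdim(X) ∈ ℤ·√(n_x) for each basic X ∈ R(n_x). Concretely: writing sq(X) for the squarefree part of FPdim(X)², one has, for all basic X, Y and every basic Z contained in XY, that sq(Z) equals the squarefree part of sq(X)·sq(Y); the partition of the basis according to the value of sq is the asserted faithful grading, and the squarefree values that occur form an elementary abelian 2-group under (n, m) ↦ squarefree part of nm. -/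
open Finset Function

open scoped ComplexOrder in
theorem Complex.eq_of_norm_le_of_sum_eq {ι : Type*} [Fintype ι] {u : ι → ℂ} {s : ι → ℝ}
    (hu : ∀ i, ‖u i‖ ≤ s i) (hsum : ∑ i, u i = ∑ i, (s i : ℂ)) (i : ι) : u i = s i := by
  have hre : ∀ j, (u j).re ≤ s j := fun j => (Complex.re_le_norm _).trans (hu j)
  have hsum_re : ∑ j, (u j).re = ∑ j, s j := by
    simpa only [Complex.re_sum, Complex.ofReal_re] using congrArg Complex.re hsum
  have hi : (u i).re = s i := (sum_eq_sum_iff_of_le fun j _ => hre j).1 hsum_re i (mem_univ i)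
  have hnonneg : 0 ≤ u i := Complex.re_eq_norm.1 <| le_antisymm (Complex.re_le_norm _) (hi ▸ hu i)
  rw [← Complex.re_add_im (u i), (Complex.nonneg_iff.1 hnonneg).2.symm, hi]
  simp

theorem eq_of_le_of_sum_mul_eq {ι : Type*} [Fintype ι] {a x y : ι → ℝ} (ha : ∀ l, 0 ≤ a l)
    (hle : ∀ l, x l ≤ y l) (h : ∑ l, a l * x l = ∑ l, a l * y l) {k : ι} (hk : 0 < a k) :
    x k = y k :=
  mul_left_cancel₀ hk.ne' <| (sum_eq_sum_iff_of_le fun l _ =>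
    mul_le_mul_of_nonneg_left (hle l) (ha l)).1 h k (mem_univ k)

theorem mem_range_algebraMap_of_forall_algHom_eq {F K L : Type*} [Field F] [Field K] [Field L]
    [Algebra F K] [Algebra F L] [IsAlgClosed L] [Algebra.IsSeparable F K] {x : K}
    (h : ∀ σ τ : K →ₐ[F] L, σ x = τ x) : x ∈ (algebraMap F K).range := by
  rw [← minpoly.natDegree_eq_one_iff,
    ← Polynomial.card_rootSet_eq_natDegree (K := L) (Algebra.IsSeparable.isSeparable F x)
      (IsAlgClosed.splits _)]
  have hroots := Algebra.IsAlgebraic.range_eval_eq_rootSet_minpoly (F := F) L x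
  have hle : Fintype.card ((minpoly F x).rootSet L) ≤ 1 := by
    refine Fintype.card_le_one_iff_subsingleton.2 (Set.Subsingleton.coe_sort ?_)
    rw [← hroots]
    rintro _ ⟨σ, rfl⟩ _ ⟨τ, rfl⟩
    exact h σ τ
  have hpos : 0 < Fintype.card ((minpoly F x).rootSet L) := by
    refine Fintype.card_pos_iff.2 (Set.Nonempty.coe_sort ?_)
    rw [← hroots]
    exact ⟨_, IsAlgClosed.lift, rfl⟩
  omega

theorem exists_nat_eq_of_isIntegral {K : Type*} [Field K] [LinearOrder K] [IsStrictOrderedRing K]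
    {x : K} (hx : IsIntegral ℤ x) (hx0 : 0 ≤ x) {q : ℚ} (hq : x = q) : ∃ n : ℕ, x = n := by
  have hq' : IsIntegral ℤ q := by
    rwa [← isIntegral_algebraMap_iff (A := ℚ) (B := K) (algebraMap ℚ K).injective, eq_ratCast, ← hq]
  obtain ⟨z, rfl⟩ := IsIntegrallyClosed.isIntegral_iff.1 hq'
  rw [eq_intCast, Rat.cast_intCast] at hq
  subst hq
  lift z to ℕ using (by exact_mod_cast hx0)
  exact ⟨z, by norm_cast⟩

theorem exists_commGroup_rangeFactorization {ι : Type*} {G : Type} [CommGroup G]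
    (hG : ∀ x : G, x * x = 1) (g : ι → G) (u : ι) (hu : g u = 1)
    (hmul : ∀ i j, g i * g j ∈ Set.range g) :
    ∃ (E : Type) (_ : CommGroup E) (e : ι → E), Surjective e ∧ (∀ x : E, x * x = 1) ∧
      (∀ i j, e i = e j ↔ g i = g j) ∧ e u = 1 ∧
      ∀ i j k, g k = g i * g j → e k = e i * e j := by
  let H : Subgroup G :=
    { carrier := Set.range g
      one_mem' := ⟨u, hu⟩
      mul_mem' := by rintro _ _ ⟨i, rfl⟩ ⟨j, rfl⟩; exact hmul i j
      inv_mem' := by rintro _ ⟨i, rfl⟩; rw [inv_eq_of_mul_eq_one_right (hG _)]; exact ⟨i, rfl⟩ }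
  refine ⟨H, inferInstance, fun i => ⟨g i, i, rfl⟩, ?_, fun x => Subtype.ext (hG x),
    fun i j => Subtype.ext_iff, Subtype.ext hu, fun i j k h => Subtype.ext h⟩
  rintro ⟨_, i, rfl⟩
  exact ⟨i, rfl⟩

namespace Nat

-- Prime exponents modulo 2: the group of positive rationals modulo squares.
abbrev SquareClass := Multiplicative (ℕ →₀ ZMod 2)

noncomputable def squareClass (n : ℕ) : SquareClass :=
  .ofAdd (Finsupp.mapRange.addMonoidHom (castAddMonoidHom (ZMod 2)) n.factorization)

theorem SquareClass.mul_self_eq_one (x : SquareClass) : x * x = 1 := by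
  ext p
  exact CharTwo.add_self_eq_zero (x.toAdd p)

theorem squareClass_mul {a b : ℕ} (ha : a ≠ 0) (hb : b ≠ 0) :
    squareClass (a * b) = squareClass a * squareClass b := by
  simp only [squareClass, factorization_mul ha hb, map_add, ofAdd_add]

theorem squareClass_sq (m : ℕ) : squareClass (m ^ 2) = 1 := by
  rw [squareClass, factorization_pow, map_nsmul, two_nsmul, ofAdd_add]
  exact SquareClass.mul_self_eq_one _

theorem squareClass_one : squareClass 1 = 1 := by
  simp [squareClass]

theorem squareClass_injOn : Set.InjOn squareClass {n | Squarefree n} := by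
  intro a ha b hb hab
  refine eq_of_factorization_eq ha.ne_zero hb.ne_zero fun p => ?_
  have hp : (a.factorization p : ZMod 2) = b.factorization p :=
    congrArg (fun x : SquareClass => x.toAdd p) hab
  rw [ZMod.natCast_eq_natCast_iff'] at hp
  have := Squarefree.natFactorization_le_one p ha
  have := Squarefree.natFactorization_le_one p hb
  omega

-- For `n = 0` this is some unspecified squarefree number.
noncomputable def squarefreePart (n : ℕ) : ℕ := (sq_mul_squarefree n).choose

theorem squarefree_squarefreePart (n : ℕ) : Squarefree (squarefreePart n) :=
  (sq_mul_squarefree n).choose_spec.choose_spec.2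

theorem exists_sq_mul_squarefreePart (n : ℕ) : ∃ m, m ^ 2 * squarefreePart n = n :=
  ⟨_, (sq_mul_squarefree n).choose_spec.choose_spec.1⟩

theorem exists_pos_sq_mul_squarefreePart {n : ℕ} (hn : n ≠ 0) :
    ∃ m, 0 < m ∧ m ^ 2 * squarefreePart n = n := by
  obtain ⟨m, hm⟩ := exists_sq_mul_squarefreePart n
  refine ⟨m, pos_of_ne_zero ?_, hm⟩
  rintro rfl
  exact hn (by rw [← hm, zero_pow two_ne_zero, zero_mul])

theorem squareClass_squarefreePart {n : ℕ} (hn : n ≠ 0) :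
    squareClass (squarefreePart n) = squareClass n := by
  obtain ⟨m, hm, hmn⟩ := exists_pos_sq_mul_squarefreePart hn
  conv_rhs => rw [← hmn]
  rw [squareClass_mul (pow_ne_zero 2 hm.ne') (squarefree_squarefreePart n).ne_zero,
    squareClass_sq, one_mul]

theorem squarefreePart_eq_iff {a b : ℕ} (ha : a ≠ 0) (hb : b ≠ 0) :
    squarefreePart a = squarefreePart b ↔ squareClass a = squareClass b := by
  rw [← squareClass_squarefreePart ha, ← squareClass_squarefreePart hb]
  exact ⟨congrArg squareClass, fun h => squareClass_injOn (squarefree_squarefreePart a)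
    (squarefree_squarefreePart b) h⟩

theorem squarefreePart_one : squarefreePart 1 = 1 :=
  squareClass_injOn (squarefree_squarefreePart 1) squarefree_one
    (squareClass_squarefreePart one_ne_zero)

theorem squareClass_eq_mul_of_mul_mul_eq_sq {a b c r : ℕ} (ha : a ≠ 0) (hb : b ≠ 0) (hc : c ≠ 0)
    (h : a * b * c = r ^ 2) : squareClass c = squareClass a * squareClass b := by
  have habc := congrArg squareClass h
  rw [squareClass_mul (mul_ne_zero ha hb) hc, squareClass_mul ha hb, squareClass_sq] at habc
  rw [← mul_one (squareClass c), ← habc, mul_comm, mul_assoc, SquareClass.mul_self_eq_one, mul_one]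

theorem exists_sq_mul_of_squareClass_eq_mul {a b c : ℕ} (ha : a ≠ 0) (hb : b ≠ 0) (hc : c ≠ 0)
    (h : squareClass c = squareClass a * squareClass b) :
    ∃ m, 0 < m ∧ squarefreePart a * squarefreePart b = m ^ 2 * squarefreePart c := by
  have hsa := (squarefree_squarefreePart a).ne_zero
  have hsb := (squarefree_squarefreePart b).ne_zero
  obtain ⟨m, hm, hmab⟩ := exists_pos_sq_mul_squarefreePart (mul_ne_zero hsa hsb)
  have hclass : squareClass (squarefreePart a * squarefreePart b) = squareClass c := by
    rw [squareClass_mul hsa hsb, squareClass_squarefreePart ha, squareClass_squarefreePart hb, h]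
  refine ⟨m, hm, ?_⟩
  rw [← hmab, (squarefreePart_eq_iff (mul_ne_zero hsa hsb) hc).2 hclass]

end Nat

section FusionRules

variable {ι : Type*} [Fintype ι] {c : ι → ι → ι → ℤ}

def SolvesFusionRules {A : Type*} [Ring A] (c : ι → ι → ι → ℤ) (w : ι → A) : Prop :=
  ∀ i j, w i * w j = ∑ k, (c i j k : A) * w k

namespace SolvesFusionRules

theorem comp {A B : Type*} [Ring A] [Ring B] {w : ι → A} (h : SolvesFusionRules c w)
    (φ : A →+* B) : SolvesFusionRules c (φ ∘ w) := fun i j => by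
  simp only [comp_apply]
  rw [← map_mul, h i j, map_sum]
  simp only [map_mul, map_intCast]

theorem of_comp {A B : Type*} [Ring A] [Ring B] {w : ι → A} {φ : A →+* B} (hφ : Injective φ)
    (h : SolvesFusionRules c (φ ∘ w)) : SolvesFusionRules c w := fun i j => hφ <| by
  simpa only [comp_apply, map_mul, map_sum, map_intCast] using h i j

theorem isIntegral {A : Type*} [CommRing A] [IsDomain A] {w : ι → A}
    (h : SolvesFusionRules c w) {i : ι} (hi : w i ≠ 0) : IsIntegral ℤ (w i) := by
  refine isIntegral_of_smul_mem_submodule (Submodule.span ℤ (Set.range w)) (fun hbot => hi ?_)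
    (Submodule.fg_span (Set.finite_range w)) _ fun n hn => ?_
  · simpa [hbot] using (Submodule.subset_span (R := ℤ) (Set.mem_range_self i) :
      w i ∈ Submodule.span ℤ (Set.range w))
  induction hn using Submodule.span_induction with
  | mem x hx =>
    obtain ⟨j, rfl⟩ := hx
    rw [smul_eq_mul, h i j]
    refine Submodule.sum_mem _ fun k _ => ?_
    rw [← zsmul_eq_mul]
    exact Submodule.smul_mem _ _ (Submodule.subset_span (Set.mem_range_self k))
  | zero => simp
  | add x y _ _ hx hy => rw [smul_add]; exact Submodule.add_mem _ hx hy
  | smul r x _ hx => rw [smul_comm]; exact Submodule.smul_mem _ _ hx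

theorem mul_sum_sq_eq {A : Type*} [CommRing A] {w : ι → A} (h : SolvesFusionRules c w)
    {i i' : ι} (hii' : ∀ j k, c i j k = c i' k j) :
    w i * ∑ j, w j ^ 2 = w i' * ∑ j, w j ^ 2 :=
  calc w i * ∑ j, w j ^ 2 = ∑ j, ∑ k, (c i j k : A) * w k * w j := by
        simp only [mul_sum, sq, ← mul_assoc, h i, sum_mul]
    _ = ∑ k, ∑ j, (c i' k j : A) * w j * w k := by
        rw [sum_comm]; simp only [hii', mul_right_comm]
    _ = w i' * ∑ j, w j ^ 2 := by
        simp only [mul_sum, sq, ← mul_assoc, h i', sum_mul]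

variable {d : ι → ℝ}

theorem exists_pos_coeff (hd : ∀ i, 0 < d i) (h : SolvesFusionRules c d) (i j : ι) :
    ∃ k, 0 < c i j k := by
  by_contra! hc
  have : d i * d j ≤ 0 := by
    rw [h i j]
    exact sum_nonpos fun k _ => mul_nonpos_of_nonpos_of_nonneg (by exact_mod_cast hc k) (hd k).le
  exact this.not_gt (mul_pos (hd i) (hd j))

theorem norm_le {w : ι → ℂ} (hd : ∀ i, 0 < d i) (hc : ∀ i j k, 0 ≤ c i j k)
    (hdc : SolvesFusionRules c d) (hw : SolvesFusionRules c w) (i : ι) : ‖w i‖ ≤ d i := by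
  rcases eq_or_ne (w i) 0 with hwi | hwi
  · simpa [hwi] using (hd i).le
  -- Perron–Frobenius: compare `w` with `d` at an index where `‖w j‖ / d j` is maximal.
  obtain ⟨j, -, hj⟩ := exists_max_image univ (fun j => ‖w j‖ / d j) ⟨i, mem_univ i⟩
  set t := ‖w j‖ / d j
  have hbound : ∀ k, ‖w k‖ ≤ t * d k := fun k => (div_le_iff₀ (hd k)).1 (hj k (mem_univ k))
  have ht : 0 < t := (div_pos (norm_pos_iff.2 hwi) (hd i)).trans_le (hj i (mem_univ i))
  have hwj : ‖w j‖ = t * d j := (div_mul_cancel₀ _ (hd j).ne').symm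
  have key : ‖w i‖ * (t * d j) ≤ d i * (t * d j) :=
    calc ‖w i‖ * (t * d j) = ‖∑ k, (c i j k : ℂ) * w k‖ := by rw [← hwj, ← norm_mul, hw i j]
      _ ≤ ∑ k, (c i j k : ℝ) * (t * d k) := by
        refine (norm_sum_le _ _).trans (sum_le_sum fun k _ => ?_)
        have hcijk : (0 : ℝ) ≤ c i j k := by exact_mod_cast hc i j k
        rw [norm_mul, Complex.norm_intCast, abs_of_nonneg hcijk]
        exact mul_le_mul_of_nonneg_left (hbound k) hcijk
      _ = d i * (t * d j) := by
        simp_rw [mul_left_comm _ t, ← mul_sum, ← hdc i j]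
  exact le_of_mul_le_mul_right key (mul_pos ht (hd j))

theorem sq_eq_of_sum_sq_eq {w : ι → ℂ} (hd : ∀ i, 0 < d i) (hc : ∀ i j k, 0 ≤ c i j k)
    (hdc : SolvesFusionRules c d) (hw : SolvesFusionRules c w)
    (hsum : ∑ i, w i ^ 2 = ∑ i, (d i : ℂ) ^ 2) (i : ι) : w i ^ 2 = (d i : ℂ) ^ 2 := by
  have := Complex.eq_of_norm_le_of_sum_eq (s := fun i => d i ^ 2) (fun j => by
    rw [norm_pow]; exact pow_le_pow_left₀ (norm_nonneg _) (hdc.norm_le hd hc hw j) 2)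
    (by push_cast; exact hsum) i
  exact_mod_cast this

theorem mul_mul_eq_of_abs_eq {r : ι → ℝ} (hc : ∀ i j k, 0 ≤ c i j k)
    (hdc : SolvesFusionRules c d) (hr : SolvesFusionRules c r) (habs : ∀ l, |r l| = d l)
    {i j k : ι} (hijk : 0 < c i j k) : r i * r j * r k = d i * d j * d k := by
  have hc' : ∀ l, (0 : ℝ) ≤ c i j l := fun l => by exact_mod_cast hc i j l
  have hijk' : (0 : ℝ) < c i j k := by exact_mod_cast hijk
  have hij : |r i * r j| = d i * d j := by rw [abs_mul, habs, habs]
  rcases (abs_eq ((abs_nonneg _).trans_eq hij)).1 hij with hij | hij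
  · have hk : r k = d k := eq_of_le_of_sum_mul_eq hc' (fun l => (le_abs_self _).trans (habs l).le)
      (by rw [← hr i j, ← hdc i j, hij]) hijk'
    rw [hij, hk]
  · have hk : -r k = d k := eq_of_le_of_sum_mul_eq hc' (fun l => (neg_le_abs _).trans (habs l).le)
      (by simp only [mul_neg, sum_neg_distrib, ← hr i j, ← hdc i j, hij, neg_neg]) hijk'
    rw [hij, ← hk]
    ring

theorem mul_mul_eq_of_sum_sq_eq {w : ι → ℂ} (hd : ∀ i, 0 < d i) (hc : ∀ i j k, 0 ≤ c i j k)
    (hdc : SolvesFusionRules c d) (hw : SolvesFusionRules c w)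
    (hsum : ∑ i, w i ^ 2 = ∑ i, (d i : ℂ) ^ 2) {i j k : ι} (hijk : 0 < c i j k) :
    w i * w j * w k = d i * d j * d k := by
  have hpm : ∀ l, w l = d l ∨ w l = -d l := fun l =>
    sq_eq_sq_iff_eq_or_eq_neg.1 (sq_eq_of_sum_sq_eq hd hc hdc hw hsum l)
  have hreal : ∀ l, w l = (w l).re := fun l => by rcases hpm l with h | h <;> rw [h] <;> simp
  have hr : SolvesFusionRules c fun l => (w l).re :=
    of_comp (φ := Complex.ofRealHom) Complex.ofReal_injective <| by
      convert hw using 1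
      exact funext fun l => (hreal l).symm
  have habs : ∀ l, |(w l).re| = d l := fun l => by
    rcases hpm l with h | h <;> simp [h, abs_of_pos (hd l)]
  rw [hreal i, hreal j, hreal k]
  exact_mod_cast mul_mul_eq_of_abs_eq hc hdc hr habs hijk

theorem exists_rat (hd : ∀ i, 0 < d i) (hc : ∀ i j k, 0 ≤ c i j k) (h : SolvesFusionRules c d)
    (hint : ∃ m : ℤ, ∑ i, d i ^ 2 = m) :
    (∀ i, ∃ q : ℚ, d i ^ 2 = q) ∧ ∀ i j k, 0 < c i j k → ∃ q : ℚ, d i * d j * d k = q := by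
  obtain ⟨m, hm⟩ := hint
  let K := IntermediateField.adjoin ℚ (Set.range d)
  have : Algebra.IsAlgebraic ℚ K := IntermediateField.isAlgebraic_adjoin <| by
    rintro _ ⟨i, rfl⟩
    exact (h.isIntegral (hd i).ne').tower_top
  let D : ι → K := fun i => ⟨d i, IntermediateField.subset_adjoin ℚ _ ⟨i, rfl⟩⟩
  have hD : SolvesFusionRules c D := of_comp (φ := algebraMap K ℝ) Subtype.val_injective h
  have hconj (σ : K →ₐ[ℚ] ℂ) : ∑ i, (σ ∘ D) i ^ 2 = ∑ i, (d i : ℂ) ^ 2 := by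
    have hmK : ∑ i, D i ^ 2 = (m : K) := Subtype.val_injective (by push_cast; exact hm)
    simp only [comp_apply, ← map_pow, ← map_sum, hmK, map_intCast]
    exact_mod_cast hm.symm
  have hrat (x : K) (hx : ∀ σ : K →ₐ[ℚ] ℂ, σ x = (x : ℝ)) : ∃ q : ℚ, (x : ℝ) = q := by
    obtain ⟨q, rfl⟩ := mem_range_algebraMap_of_forall_algHom_eq (L := ℂ) fun σ τ => by
      rw [hx σ, hx τ]
    exact ⟨q, rfl⟩
  refine ⟨fun i => hrat (D i ^ 2) fun σ => ?_, fun i j k hijk => hrat (D i * D j * D k) fun σ => ?_⟩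
  · simpa using sq_eq_of_sum_sq_eq hd hc h (hD.comp σ.toRingHom) (hconj σ) i
  · simpa using mul_mul_eq_of_sum_sq_eq hd hc h (hD.comp σ.toRingHom) (hconj σ) hijk

theorem exists_nat (hd : ∀ i, 0 < d i) (hc : ∀ i j k, 0 ≤ c i j k) (h : SolvesFusionRules c d)
    (hint : ∃ m : ℤ, ∑ i, d i ^ 2 = m) :
    (∀ i, ∃ n : ℕ, d i ^ 2 = n) ∧ ∀ i j k, 0 < c i j k → ∃ n : ℕ, d i * d j * d k = n := by
  have hdint : ∀ i, IsIntegral ℤ (d i) := fun i => h.isIntegral (hd i).ne'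
  obtain ⟨hsq, htriple⟩ := h.exists_rat hd hc hint
  refine ⟨fun i => ?_, fun i j k hijk => ?_⟩
  · obtain ⟨q, hq⟩ := hsq i
    exact exists_nat_eq_of_isIntegral ((hdint i).pow 2) (sq_nonneg _) hq
  · obtain ⟨q, hq⟩ := htriple i j k hijk
    exact exists_nat_eq_of_isIntegral (((hdint i).mul (hdint j)).mul (hdint k))
      (by have := hd i; have := hd j; have := hd k; positivity) hq

end SolvesFusionRules

end FusionRules

namespace BasedRing

variable {ι R : Type*} [Fintype ι] [DecidableEq ι] [Ring R] (BR : BasedRing ι R)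

noncomputable def structConst (i j k : ι) : ℤ := BR.b.repr (BR.b i * BR.b j) k

theorem solvesFusionRules_map {A : Type*} [Ring A] (f : R →+* A) :
    SolvesFusionRules BR.structConst fun i => f (BR.b i) := fun i j => by
  conv_lhs => rw [← map_mul, ← BR.b.sum_repr (BR.b i * BR.b j), map_sum]
  simp only [zsmul_eq_mul, map_mul, map_intCast, structConst]

theorem map_star {K : Type*} [Field K] [LinearOrder K] [IsStrictOrderedRing K] (f : R →+* K)
    (i : ι) : f (BR.b (BR.star i)) = f (BR.b i) := by
  have hpos : 0 < ∑ j, f (BR.b j) ^ 2 := by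
    refine lt_of_lt_of_le ?_ (single_le_sum (fun j _ => sq_nonneg (f (BR.b j))) (mem_univ BR.unit))
    simp [BR.b_unit]
  exact mul_right_cancel₀ hpos.ne'
    ((BR.solvesFusionRules_map f).mul_sum_sq_eq fun j k => BR.adj_left i j k).symm

theorem exists_nat_eq_fpdim_sq (f : R →+* ℝ) (hf : ∀ i, 0 < f (BR.b i))
    (hint : ∃ m : ℤ, ∑ i, f (BR.b i) ^ 2 = m) :
    ∃ N : ι → ℕ, (∀ i, f (BR.b i) ^ 2 = N i) ∧ (∀ i, N i ≠ 0) ∧ N BR.unit = 1 ∧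
      (∀ i, N (BR.star i) = N i) ∧ ∀ i j k, BR.contains (BR.b i * BR.b j) k →
        Nat.squareClass (N k) = Nat.squareClass (N i) * Nat.squareClass (N j) := by
  obtain ⟨hsq, htriple⟩ := (BR.solvesFusionRules_map f).exists_nat hf BR.c_nonneg hint
  choose N hN using hsq
  have hN0 (i : ι) : N i ≠ 0 := by
    have := hN i ▸ pow_pos (hf i) 2
    exact_mod_cast this.ne'
  refine ⟨N, hN, hN0, ?_, fun i => ?_, fun i j k hijk => ?_⟩
  · have := hN BR.unit
    rw [BR.b_unit, map_one, one_pow] at this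
    exact_mod_cast this.symm
  · have := hN (BR.star i)
    rw [BR.map_star, hN i] at this
    exact_mod_cast this.symm
  · obtain ⟨r, hr⟩ := htriple i j k hijk
    refine Nat.squareClass_eq_mul_of_mul_mul_eq_sq (hN0 i) (hN0 j) (hN0 k) (r := r) ?_
    have : ((N i * N j * N k : ℕ) : ℝ) = r ^ 2 := by
      push_cast
      rw [← hN, ← hN, ← hN, ← hr]
      ring
    exact_mod_cast this

end BasedRing

/-- Let `R` be a based ring whose Frobenius–Perron dimension
`FPdim(R) = Σ_i FPdim(X_i)²` is an integer, where `FPdim = f` is the (unique)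
ring homomorphism `R → ℝ` positive on basic elements. Then `FPdim(X)²` is a
positive integer for every basic `X`, and there is a function `sq` assigning to
each basic element the squarefree part of `FPdim(X)²` such that: `sq` is
squarefree-valued, `FPdim(X)² = m² · sq(X)` for some positive integer `m`,
`sq(1) = 1`, `sq(X*) = sq(X)`, and for every basic `Z` contained in `XY` the
squarefree part of `sq(X)·sq(Y)` is `sq(Z)`. Moreover the partition of the
basis by the value of `sq` is a faithful grading by an elementary abelian
`2`-group `E` (realized by a surjective `e : ι → E` whose fibers are the level
sets of `sq`). -/
theorem integer_FPdim_grading {ι R : Type*} [Fintype ι] [DecidableEq ι]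
    [Ring R] (BR : BasedRing ι R) (f : R →+* ℝ) (hf : ∀ i, 0 < f (BR.b i))
    (hint : ∃ m : ℤ, (∑ i : ι, (f (BR.b i)) ^ 2) = (m : ℝ)) :
    (∀ i, ∃ N : ℕ, 0 < N ∧ (f (BR.b i)) ^ 2 = (N : ℝ)) ∧
    ∃ sq : ι → ℕ,
      (∀ i, Squarefree (sq i)) ∧
      (∀ i, ∃ m : ℕ, 0 < m ∧ (f (BR.b i)) ^ 2 = ((m ^ 2 * sq i : ℕ) : ℝ)) ∧
      sq BR.unit = 1 ∧
      (∀ i, sq (BR.star i) = sq i) ∧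
      (∀ i j k, BR.contains (BR.b i * BR.b j) k →
        ∃ m : ℕ, 0 < m ∧ sq i * sq j = m ^ 2 * sq k) ∧
      ∃ (E : Type) (_ : CommGroup E) (e : ι → E),
        Function.Surjective e ∧
        (∀ x : E, x * x = 1) ∧
        (∀ i j, e i = e j ↔ sq i = sq j) ∧
        e BR.unit = 1 ∧
        (∀ i j k, BR.contains (BR.b i * BR.b j) k → e k = e i * e j) := by
  obtain ⟨N, hN, hN0, hNu, hNstar, hclass⟩ := BR.exists_nat_eq_fpdim_sq f hf hint
  obtain ⟨E, _, e, he_surj, he_sq, he_iff, he_unit, he_mul⟩ :=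
    exists_commGroup_rangeFactorization Nat.SquareClass.mul_self_eq_one
      (fun i => Nat.squareClass (N i)) BR.unit (by simp only [hNu, Nat.squareClass_one])
      fun i j => by
        obtain ⟨k, hk⟩ := (BR.solvesFusionRules_map f).exists_pos_coeff hf i j
        exact ⟨k, hclass i j k hk⟩
  refine ⟨fun i => ⟨N i, Nat.pos_of_ne_zero (hN0 i), hN i⟩, fun i => Nat.squarefreePart (N i),
    fun i => Nat.squarefree_squarefreePart _, fun i => ?_,
    by simp only [hNu, Nat.squarefreePart_one], fun i => by simp only [hNstar],
    fun i j k h => Nat.exists_sq_mul_of_squareClass_eq_mul (hN0 i) (hN0 j) (hN0 k) (hclass i j k h),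
    E, inferInstance, e, he_surj, he_sq,
    fun i j => (he_iff i j).trans (Nat.squarefreePart_eq_iff (hN0 i) (hN0 j)).symm, he_unit,
    fun i j k h => he_mul i j k (hclass i j k h)⟩
  obtain ⟨m, hm, hmN⟩ := Nat.exists_pos_sq_mul_squarefreePart (hN0 i)
  exact ⟨m, hm, by rw [hN i, hmN]⟩
end

section
/- Let R be a nilpotent based ring, let M be an indecomposable based R-module with basis {V_j}_{j∈J}, and let (μ_j)_{j∈J} be positive real numbers such that Q = Σ_{j∈J} μ_j V_j satisfies X·Q = FPdim(X)·Q in M ⊗_ℤ ℝ for all X ∈ R. Then for every j ∈ J, the ratio (Σ_{k∈J} μ_k²)/μ_j² is an integer; i.e., FPdim(M)/FPdim(V_j)² ∈ ℤ for every basic element V_j of M. -/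
namespace BasedRing

variable {ι R : Type*} [Fintype ι] [DecidableEq ι] [Ring R] (BR : BasedRing ι R)

open Classical in
/-- The adjoint subring of the based subring spanned by `C`: the basic elements
contained in some power (`n ≥ 1`) of `Σ_{X basic in S} X X*`. -/
noncomputable def adOf (C : Finset ι) : Finset ι :=
  Finset.univ.filter fun k => ∃ n : ℕ, 1 ≤ n ∧
    BR.contains ((∑ i ∈ C, BR.b i * BR.b (BR.star i)) ^ n) k

/-- The upper central series: `R^(0) = R`, `R^(n) = (R^(n-1))_ad`
(for `C = Finset.univ`). -/
noncomputable def upperOf (C : Finset ι) : ℕ → Finset ι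
  | 0 => C
  | n + 1 => BR.adOf (upperOf C n)

end BasedRing

/-!
Induction along the upper central series. If `S` is a based subring and `T = ∑_{X ∈ S} X X*`,
then `T` is central in `S`, so every basic `X ∈ S` maps an orbit of `S_ad` on the basis of `M`
into a single `S_ad`-orbit, and `X*` maps that one back. Evaluating `∑ d_{X,j}^k μ_j μ_k` over
the two orbits `A`, `B` with the eigenvector equations for `X` and `X*` gives
`FPdim X · ∑_B μ² = FPdim X* · ∑_A μ²`, and `FPdim X = FPdim X*`. Hence all `S_ad`-orbits
inside one `S`-orbit have the same weight `∑ μ²`, and the weight of an `S`-orbit is an integer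
multiple of the weight of each `S_ad`-orbit in it. Orbits of the trivial based ring are single
basis elements, and by indecomposability the only `R`-orbit is the whole basis.
-/

lemma Finset.sum_mul_pos_iff_of_nonneg {α : Type*} {s : Finset α} {f g : α → ℤ}
    (hf : ∀ a ∈ s, 0 ≤ f a) (hg : ∀ a ∈ s, 0 ≤ g a) :
    0 < ∑ a ∈ s, f a * g a ↔ ∃ a ∈ s, 0 < f a ∧ 0 < g a := by
  rw [Finset.sum_pos_iff_of_nonneg fun a ha => mul_nonneg (hf a ha) (hg a ha)]
  refine exists_congr fun a => and_congr_right fun ha =>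
    ⟨fun h => ⟨(hf a ha).lt_of_ne (left_ne_zero_of_mul h.ne').symm,
      (hg a ha).lt_of_ne (right_ne_zero_of_mul h.ne').symm⟩, fun h => mul_pos h.1 h.2⟩

lemma Module.Basis.repr_mul_smul_eq_sum {κ R M : Type*} [Fintype κ] [Ring R] [AddCommGroup M]
    [Module R M] (v : Module.Basis κ ℤ M) (x y : R) (j k : κ) :
    v.repr ((x * y) • v j) k = ∑ m, v.repr (y • v j) m * v.repr (x • v m) k := by
  conv_lhs => rw [mul_smul, ← v.sum_repr (y • v j)]
  simp only [Finset.smul_sum, smul_comm x, map_sum, map_zsmul, Finsupp.coe_finsetSum,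
    Finset.sum_apply, Finsupp.smul_apply, smul_eq_mul]

lemma mul_sum_sq_eq_of_eigen {α : Type*} {A B : Finset α} {d : α → α → ℝ} {μ : α → ℝ}
    {l l' : ℝ} (hcol : ∀ k ∈ B, ∑ j ∈ A, d j k * μ j = l * μ k)
    (hrow : ∀ j ∈ A, ∑ k ∈ B, d j k * μ k = l' * μ j) :
    l * ∑ k ∈ B, μ k ^ 2 = l' * ∑ j ∈ A, μ j ^ 2 := by
  calc l * ∑ k ∈ B, μ k ^ 2 = ∑ k ∈ B, (∑ j ∈ A, d j k * μ j) * μ k := by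
        rw [Finset.mul_sum]
        exact Finset.sum_congr rfl fun k hk => by rw [hcol k hk]; ring
    _ = ∑ j ∈ A, (∑ k ∈ B, d j k * μ k) * μ j := by
        simp_rw [Finset.sum_mul]
        rw [Finset.sum_comm]
        exact Finset.sum_congr rfl fun j _ => Finset.sum_congr rfl fun k _ => by ring
    _ = l' * ∑ j ∈ A, μ j ^ 2 := by
        rw [Finset.mul_sum]
        exact Finset.sum_congr rfl fun j hj => by rw [hrow j hj]; ring

namespace BasedRing

variable {ι R : Type*} [Fintype ι] [DecidableEq ι] [Ring R] (BR : BasedRing ι R)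

lemma star_involutive : Function.Involutive BR.star := BR.star_invol

lemma repr_basis_pos_iff {i k : ι} : 0 < BR.b.repr (BR.b i) k ↔ i = k := by
  rw [BR.b.repr_self_apply]
  split_ifs <;> simp [*]

lemma repr_basis_nonneg (i k : ι) : 0 ≤ BR.b.repr (BR.b i) k := by
  rw [BR.b.repr_self_apply]
  split_ifs <;> simp

lemma repr_mul_basis_star (i j k : ι) :
    BR.b.repr (BR.b i * BR.b j) k =
      BR.b.repr (BR.b (BR.star j) * BR.b (BR.star i)) (BR.star k) := by
  rw [BR.adj_right, BR.adj_left, BR.adj_right]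

lemma star_unit : BR.star BR.unit = BR.unit := by
  have h := BR.adj_right BR.unit BR.unit BR.unit
  rw [BR.b_unit, one_mul, one_mul, ← BR.b_unit, BR.b.repr_self, BR.b.repr_self_apply] at h
  by_contra hne
  simp [hne] at h

lemma repr_mul_star_unit (i : ι) : BR.b.repr (BR.b i * BR.b (BR.star i)) BR.unit = 1 := by
  rw [BR.adj_right, BR.b_unit, one_mul, BR.star_invol, BR.b.repr_self, Finsupp.single_eq_same]

lemma repr_star_mul_unit (i : ι) : BR.b.repr (BR.b (BR.star i) * BR.b i) BR.unit = 1 := by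
  simpa [BR.star_invol] using BR.repr_mul_star_unit (BR.star i)

lemma repr_mul_eq_sum_left (x y : R) (k : ι) :
    BR.b.repr (x * y) k = ∑ a, BR.b.repr x a * BR.b.repr (BR.b a * y) k := by
  conv_lhs => rw [← BR.b.sum_repr x]
  simp only [Finset.sum_mul, smul_mul_assoc, map_sum, map_zsmul, Finsupp.coe_finsetSum,
    Finset.sum_apply, Finsupp.smul_apply, smul_eq_mul]

lemma repr_mul_eq_sum_right (x y : R) (k : ι) :
    BR.b.repr (x * y) k = ∑ c, BR.b.repr y c * BR.b.repr (x * BR.b c) k := by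
  conv_lhs => rw [← BR.b.sum_repr y]
  simp only [Finset.mul_sum, mul_smul_comm, map_sum, map_zsmul, Finsupp.coe_finsetSum,
    Finset.sum_apply, Finsupp.smul_apply, smul_eq_mul]

def nonnegCone : Subsemiring R where
  carrier := {x | ∀ k, 0 ≤ BR.b.repr x k}
  zero_mem' := by simp
  one_mem' k := by rw [← BR.b_unit]; exact BR.repr_basis_nonneg BR.unit k
  add_mem' hx hy k := by rw [map_add, Finsupp.add_apply]; exact add_nonneg (hx k) (hy k)
  mul_mem' {x y} hx hy k := by
    rw [repr_mul_eq_sum_left]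
    refine Finset.sum_nonneg fun a _ => mul_nonneg (hx a) ?_
    rw [repr_mul_eq_sum_right]
    exact Finset.sum_nonneg fun c _ => mul_nonneg (hy c) (BR.c_nonneg a c k)

lemma basis_mem_nonnegCone (i : ι) : BR.b i ∈ BR.nonnegCone := BR.repr_basis_nonneg i

lemma repr_mul_pos_iff {x y : R} (hx : x ∈ BR.nonnegCone) (hy : y ∈ BR.nonnegCone) {k : ι} :
    0 < BR.b.repr (x * y) k ↔ ∃ a c, 0 < BR.b.repr x a ∧ 0 < BR.b.repr y c ∧
      0 < BR.b.repr (BR.b a * BR.b c) k := by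
  have hbasis_mul (a : ι) : BR.b a * y ∈ BR.nonnegCone :=
    BR.nonnegCone.mul_mem (BR.basis_mem_nonnegCone a) hy
  simp_rw [BR.repr_mul_eq_sum_left x, Finset.sum_mul_pos_iff_of_nonneg (fun a _ => hx a)
    (fun a _ => hbasis_mul a k), BR.repr_mul_eq_sum_right (BR.b _) y,
    Finset.sum_mul_pos_iff_of_nonneg (fun c _ => hy c) (fun c _ => BR.c_nonneg _ c k)]
  simp [exists_and_left]

noncomputable def casimir (C : Finset ι) : R := ∑ i ∈ C, BR.b i * BR.b (BR.star i)

structure IsStarMulClosed (C : Finset ι) : Prop where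
  star_mem : ∀ i ∈ C, BR.star i ∈ C
  mem_of_repr_mul_pos : ∀ i ∈ C, ∀ j ∈ C, ∀ k, 0 < BR.b.repr (BR.b i * BR.b j) k → k ∈ C

lemma isStarMulClosed_univ : BR.IsStarMulClosed Finset.univ :=
  ⟨fun _ _ => Finset.mem_univ _, fun _ _ _ _ _ _ => Finset.mem_univ _⟩

variable {BR}

lemma casimir_mem_nonnegCone (C : Finset ι) : BR.casimir C ∈ BR.nonnegCone :=
  Subsemiring.sum_mem _ fun _ _ =>
    BR.nonnegCone.mul_mem (BR.basis_mem_nonnegCone _) (BR.basis_mem_nonnegCone _)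

lemma repr_casimir_pos_iff {C : Finset ι} {k : ι} :
    0 < BR.b.repr (BR.casimir C) k ↔ ∃ i ∈ C, 0 < BR.b.repr (BR.b i * BR.b (BR.star i)) k := by
  simp only [casimir, map_sum, Finsupp.coe_finsetSum, Finset.sum_apply]
  exact Finset.sum_pos_iff_of_nonneg fun i _ => BR.c_nonneg _ _ _

lemma repr_casimir_star (C : Finset ι) (k : ι) :
    BR.b.repr (BR.casimir C) (BR.star k) = BR.b.repr (BR.casimir C) k := by
  simp only [casimir, map_sum, Finsupp.coe_finsetSum, Finset.sum_apply]
  refine Finset.sum_congr rfl fun i _ => ?_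
  rw [BR.repr_mul_basis_star i, BR.star_invol, BR.star_invol]

lemma mem_adOf {C : Finset ι} {k : ι} :
    k ∈ BR.adOf C ↔ ∃ n, 1 ≤ n ∧ 0 < BR.b.repr (BR.casimir C ^ n) k := by
  classical
  rw [adOf, Finset.mem_filter]
  simp [contains, casimir]

lemma mem_of_repr_casimir_pos {C : Finset ι} (hC : BR.IsStarMulClosed C) {k : ι}
    (h : 0 < BR.b.repr (BR.casimir C) k) : k ∈ C := by
  obtain ⟨i, hi, hk⟩ := repr_casimir_pos_iff.1 h
  exact hC.mem_of_repr_mul_pos i hi _ (hC.star_mem i hi) k hk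

lemma mem_of_repr_casimir_pow_pos {C : Finset ι} (hC : BR.IsStarMulClosed C) {n : ℕ}
    (hn : 1 ≤ n) {k : ι} (hpos : 0 < BR.b.repr (BR.casimir C ^ n) k) : k ∈ C := by
  induction n, hn using Nat.le_induction generalizing k with
  | base => exact mem_of_repr_casimir_pos hC (by simpa using hpos)
  | succ n hn ih =>
    rw [pow_succ, BR.repr_mul_pos_iff (BR.nonnegCone.pow_mem (casimir_mem_nonnegCone C) n)
      (casimir_mem_nonnegCone C)] at hpos
    obtain ⟨a, c, ha, hc, hk⟩ := hpos
    exact hC.mem_of_repr_mul_pos a (ih ha) c (mem_of_repr_casimir_pos hC hc) k hk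

lemma adOf_subset {C : Finset ι} (hC : BR.IsStarMulClosed C) : BR.adOf C ⊆ C := fun _ hk =>
  have ⟨_, hn, hpos⟩ := mem_adOf.1 hk
  mem_of_repr_casimir_pow_pos hC hn hpos

lemma repr_casimir_pow_star_pos {C : Finset ι} {n : ℕ} {k : ι}
    (h : 0 < BR.b.repr (BR.casimir C ^ n) k) : 0 < BR.b.repr (BR.casimir C ^ n) (BR.star k) := by
  have hT := casimir_mem_nonnegCone (BR := BR) C
  induction n generalizing k with
  | zero =>
    rw [pow_zero, ← BR.b_unit, BR.repr_basis_pos_iff] at h ⊢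
    rw [← h, BR.star_unit]
  | succ n ih =>
    have hTn := BR.nonnegCone.pow_mem hT n
    rw [pow_succ, BR.repr_mul_pos_iff hTn hT] at h
    rw [pow_succ', BR.repr_mul_pos_iff hT hTn]
    obtain ⟨a, c, ha, hc, hk⟩ := h
    refine ⟨BR.star c, BR.star a, by rwa [repr_casimir_star], ih ha, ?_⟩
    rwa [BR.repr_mul_basis_star] at hk

lemma isStarMulClosed_adOf (C : Finset ι) : BR.IsStarMulClosed (BR.adOf C) := by
  have hT := casimir_mem_nonnegCone (BR := BR) C
  refine ⟨fun i hi => ?_, fun i hi j hj k hk => ?_⟩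
  · obtain ⟨n, hn, hpos⟩ := mem_adOf.1 hi
    exact mem_adOf.2 ⟨n, hn, repr_casimir_pow_star_pos hpos⟩
  · obtain ⟨p, hp, hip⟩ := mem_adOf.1 hi
    obtain ⟨q, -, hjq⟩ := mem_adOf.1 hj
    refine mem_adOf.2 ⟨p + q, by omega, ?_⟩
    rw [pow_add, BR.repr_mul_pos_iff (BR.nonnegCone.pow_mem hT p) (BR.nonnegCone.pow_mem hT q)]
    exact ⟨i, j, hip, hjq, hk⟩

lemma unit_mem_adOf {C : Finset ι} {i : ι} (hi : i ∈ C) : BR.unit ∈ BR.adOf C :=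
  mem_adOf.2 ⟨1, le_rfl, by
    rw [pow_one, repr_casimir_pos_iff]
    exact ⟨i, hi, by rw [BR.repr_mul_star_unit]; exact one_pos⟩⟩

lemma upperOf_succ' (C : Finset ι) (n : ℕ) :
    BR.upperOf C (n + 1) = BR.upperOf (BR.adOf C) n := by
  induction n with
  | zero => rfl
  | succ n ih => exact congrArg BR.adOf ih

lemma commute_basis_casimir {C : Finset ι} (hC : BR.IsStarMulClosed C) {a : ι} (ha : a ∈ C) :
    Commute (BR.b a) (BR.casimir C) := by
  let c : ι → ι → ℤ := fun s i => BR.b.repr (BR.b (BR.star s) * BR.b a) (BR.star i)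
  have hc_nonneg (s i : ι) : 0 ≤ c s i := BR.c_nonneg _ _ _
  have hc_left (s i : ι) : BR.b.repr (BR.b a * BR.b i) s = c s i := by
    rw [BR.adj_right, BR.adj_left]
  have hleft : BR.b a * BR.casimir C = ∑ i ∈ C, ∑ s ∈ C, c s i • (BR.b s * BR.b (BR.star i)) := by
    simp_rw [casimir, Finset.mul_sum, ← mul_assoc]
    refine Finset.sum_congr rfl fun i hi => ?_
    conv_lhs => rw [← BR.b.sum_repr (BR.b a * BR.b i)]
    simp_rw [Finset.sum_mul, smul_mul_assoc, hc_left]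
    refine (Finset.sum_subset (Finset.subset_univ C) fun s _ hs => ?_).symm
    have : ¬ 0 < c s i := fun h => hs (hC.mem_of_repr_mul_pos a ha i hi s (hc_left s i ▸ h))
    rw [le_antisymm (not_lt.1 this) (hc_nonneg s i), zero_smul]
  have hright : BR.casimir C * BR.b a = ∑ s ∈ C, ∑ i ∈ C, c s i • (BR.b s * BR.b (BR.star i)) := by
    simp_rw [casimir, Finset.sum_mul, mul_assoc]
    refine Finset.sum_congr rfl fun s hs => ?_
    conv_lhs => rw [← BR.b.sum_repr (BR.b (BR.star s) * BR.b a)]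
    rw [Finset.mul_sum, ← Equiv.sum_comp (BR.star_involutive.toPerm _)]
    simp_rw [Function.Involutive.coe_toPerm, mul_smul_comm]
    refine (Finset.sum_subset (Finset.subset_univ C) fun i _ hi => ?_).symm
    have : ¬ 0 < c s i := fun h => hi <| BR.star_invol i ▸ hC.star_mem _
      (hC.mem_of_repr_mul_pos _ (hC.star_mem s hs) a ha _ h)
    change c s i • _ = 0
    rw [le_antisymm (not_lt.1 this) (hc_nonneg s i), zero_smul]
  rw [Commute, SemiconjBy, hleft, hright, Finset.sum_comm]

-- `X_i X_m X_i*` is dominated by `X_i T^p X_i* = T^p X_i X_i*`, which is dominated by `T^(p+1)`.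
lemma conj_mem_adOf {C : Finset ι} (hC : BR.IsStarMulClosed C) {i m u : ι} (hi : i ∈ C)
    (hm : m ∈ BR.adOf C) (hu : 0 < BR.b.repr (BR.b i * BR.b m * BR.b (BR.star i)) u) :
    u ∈ BR.adOf C := by
  have hT := casimir_mem_nonnegCone (BR := BR) C
  have hb := BR.basis_mem_nonnegCone
  obtain ⟨p, hp, hmp⟩ := mem_adOf.1 hm
  have hTp := BR.nonnegCone.pow_mem hT p
  have hconj : 0 < BR.b.repr (BR.b i * BR.casimir C ^ p * BR.b (BR.star i)) u := by
    rw [BR.repr_mul_pos_iff (BR.nonnegCone.mul_mem (hb i) (hb m)) (hb _)] at hu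
    obtain ⟨a, c, ha, hc, hac⟩ := hu
    rw [BR.repr_mul_pos_iff (BR.nonnegCone.mul_mem (hb i) hTp) (hb _)]
    refine ⟨a, c, ?_, hc, hac⟩
    rw [BR.repr_mul_pos_iff (hb i) hTp]
    exact ⟨i, m, BR.repr_basis_pos_iff.2 rfl, hmp, ha⟩
  rw [((commute_basis_casimir hC hi).pow_right p).eq, mul_assoc,
    BR.repr_mul_pos_iff hTp (BR.nonnegCone.mul_mem (hb i) (hb _))] at hconj
  obtain ⟨a, c, ha, hc, hac⟩ := hconj
  refine mem_adOf.2 ⟨p + 1, by omega, ?_⟩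
  rw [pow_succ, BR.repr_mul_pos_iff hTp hT]
  exact ⟨a, c, ha, repr_casimir_pos_iff.2 ⟨i, hi, hc⟩, hac⟩

lemma map_mul_basis_eq_sum (f : R →+* ℝ) (i j : ι) :
    f (BR.b i) * f (BR.b j) = ∑ k, (BR.b.repr (BR.b i * BR.b j) k : ℝ) * f (BR.b k) := by
  conv_lhs => rw [← map_mul, ← BR.b.sum_repr (BR.b i * BR.b j)]
  simp [map_sum, zsmul_eq_mul]

lemma map_basis_star (f : R →+* ℝ) (i : ι) : f (BR.b (BR.star i)) = f (BR.b i) := by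
  have hpos : 0 < ∑ k, f (BR.b k) ^ 2 :=
    lt_of_lt_of_le (by simp [BR.b_unit]) (Finset.single_le_sum (fun k _ => sq_nonneg (f (BR.b k)))
      (Finset.mem_univ BR.unit))
  refine mul_right_cancel₀ hpos.ne' (mul_sum_sq_eq_of_eigen (A := Finset.univ)
    (d := fun j k => (BR.b.repr (BR.b i * BR.b j) k : ℝ)) (fun k _ => ?_) fun j _ => ?_)
  · simp_rw [BR.adj_left i, ← map_mul_basis_eq_sum]
  · rw [← map_mul_basis_eq_sum]

section Module

variable {κ M : Type*} [AddCommGroup M] [Module R M]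

variable (BR) in
structure IsBasedModule (v : Module.Basis κ ℤ M) : Prop where
  nonneg : ∀ (i : ι) (j k : κ), 0 ≤ v.repr (BR.b i • v j) k
  adj : ∀ (i : ι) (j k : κ), v.repr (BR.b i • v j) k = v.repr (BR.b (BR.star i) • v k) j

variable (BR) in
lemma repr_smul_eq_sum (v : Module.Basis κ ℤ M) (x : R) (j k : κ) :
    v.repr (x • v j) k = ∑ u, BR.b.repr x u * v.repr (BR.b u • v j) k := by
  conv_lhs => rw [← BR.b.sum_repr x]
  simp only [Finset.sum_smul, smul_assoc, map_sum, map_zsmul, Finsupp.coe_finsetSum,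
    Finset.sum_apply, Finsupp.smul_apply, smul_eq_mul]

variable {v : Module.Basis κ ℤ M}

lemma IsBasedModule.repr_smul_pos_iff (hM : IsBasedModule BR v) {x : R}
    (hx : x ∈ BR.nonnegCone) {j k : κ} :
    0 < v.repr (x • v j) k ↔ ∃ u, 0 < BR.b.repr x u ∧ 0 < v.repr (BR.b u • v j) k := by
  rw [BR.repr_smul_eq_sum v, Finset.sum_mul_pos_iff_of_nonneg (fun u _ => hx u)
    fun u _ => hM.nonneg u j k]
  simp

lemma IsBasedModule.repr_smul_nonneg (hM : IsBasedModule BR v) {x : R}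
    (hx : x ∈ BR.nonnegCone) (j k : κ) : 0 ≤ v.repr (x • v j) k := by
  rw [BR.repr_smul_eq_sum v]
  exact Finset.sum_nonneg fun u _ => mul_nonneg (hx u) (hM.nonneg u j k)

variable (BR v) in
def Step (C : Finset ι) (a b : κ) : Prop := ∃ i ∈ C, 0 < v.repr (BR.b i • v a) b

variable (BR v) in
def Reach (C : Finset ι) : κ → κ → Prop := Relation.ReflTransGen (BR.Step v C)

lemma Reach.mono {C C' : Finset ι} (h : C' ⊆ C) {a b : κ} (hab : BR.Reach v C' a b) :
    BR.Reach v C a b :=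
  Relation.ReflTransGen.mono (fun _ _ ⟨i, hi, hpos⟩ => ⟨i, h hi, hpos⟩) _ _ hab

lemma IsBasedModule.reach_symm (hM : IsBasedModule BR v) {C : Finset ι}
    (hC : ∀ i ∈ C, BR.star i ∈ C) {a b : κ} (h : BR.Reach v C a b) : BR.Reach v C b a := by
  induction h with
  | refl => exact .refl
  | tail _ hstep ih =>
    obtain ⟨i, hi, hpos⟩ := hstep
    exact ih.head ⟨BR.star i, hC i hi, hM.adj i _ _ ▸ hpos⟩

variable [Fintype κ]

lemma IsBasedModule.repr_mul_smul_pos_iff (hM : IsBasedModule BR v) {x y : R}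
    (hx : x ∈ BR.nonnegCone) (hy : y ∈ BR.nonnegCone) {j k : κ} :
    0 < v.repr ((x * y) • v j) k ↔ ∃ m, 0 < v.repr (y • v j) m ∧ 0 < v.repr (x • v m) k := by
  rw [v.repr_mul_smul_eq_sum, Finset.sum_mul_pos_iff_of_nonneg
    (fun m _ => hM.repr_smul_nonneg hy j m) fun m _ => hM.repr_smul_nonneg hx m k]
  simp

lemma IsBasedModule.exists_repr_smul_pos (hM : IsBasedModule BR v) (i : ι) (j : κ) :
    ∃ k, 0 < v.repr (BR.b i • v j) k := by
  have hb := BR.basis_mem_nonnegCone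
  have h : 0 < v.repr ((BR.b (BR.star i) * BR.b i) • v j) j := by
    refine (hM.repr_smul_pos_iff (BR.nonnegCone.mul_mem (hb _) (hb i))).2 ⟨BR.unit, ?_, ?_⟩
    · rw [BR.repr_star_mul_unit]
      exact one_pos
    · simp [BR.b_unit]
  obtain ⟨k, hk, -⟩ := (hM.repr_mul_smul_pos_iff (hb _) (hb i)).1 h
  exact ⟨k, hk⟩

variable (BR v) in
open Classical in
noncomputable def orbit (C : Finset ι) (j : κ) : Finset κ := Finset.univ.filter (BR.Reach v C j)

lemma mem_orbit {C : Finset ι} {j k : κ} : k ∈ BR.orbit v C j ↔ BR.Reach v C j k := by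
  classical
  simp [orbit]

lemma IsBasedModule.orbit_eq_of_reach (hM : IsBasedModule BR v) {C : Finset ι}
    (hC : ∀ i ∈ C, BR.star i ∈ C) {a b : κ} (h : BR.Reach v C a b) :
    BR.orbit v C a = BR.orbit v C b := by
  ext k
  simp only [mem_orbit]
  exact ⟨(hM.reach_symm hC h).trans, h.trans⟩

lemma orbit_singleton_unit (j : κ) : BR.orbit v {BR.unit} j = {j} := by
  classical
  have hstep {a b : κ} (h : BR.Step v {BR.unit} a b) : a = b := by
    obtain ⟨i, hi, hpos⟩ := h
    rw [Finset.mem_singleton.1 hi, BR.b_unit, one_smul, v.repr_self_apply] at hpos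
    by_contra hne
    simp [hne] at hpos
  ext k
  rw [mem_orbit, Finset.mem_singleton]
  refine ⟨fun h => ?_, fun h => h ▸ Relation.ReflTransGen.refl⟩
  induction h with
  | refl => rfl
  | tail _ hbc ih => exact (hstep hbc).symm.trans ih

lemma IsBasedModule.step_adOf_of_conj (hM : IsBasedModule BR v) {C : Finset ι}
    (hC : BR.IsStarMulClosed C) {i m : ι} (hi : i ∈ C) (hm : m ∈ BR.adOf C) {j j' k k' : κ}
    (hjk : 0 < v.repr (BR.b i • v j) k) (hjj' : 0 < v.repr (BR.b m • v j) j')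
    (hj'k' : 0 < v.repr (BR.b i • v j') k') : BR.Step v (BR.adOf C) k k' := by
  have hb := BR.basis_mem_nonnegCone
  have h : 0 < v.repr ((BR.b i * BR.b m * BR.b (BR.star i)) • v k) k' := by
    rw [hM.repr_mul_smul_pos_iff (BR.nonnegCone.mul_mem (hb i) (hb m)) (hb _)]
    refine ⟨j, hM.adj i j k ▸ hjk, ?_⟩
    rw [hM.repr_mul_smul_pos_iff (hb i) (hb m)]
    exact ⟨j', hjj', hj'k'⟩
  obtain ⟨u, hu, huk⟩ := (hM.repr_smul_pos_iff
    (BR.nonnegCone.mul_mem (BR.nonnegCone.mul_mem (hb i) (hb m)) (hb _))).1 h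
  exact ⟨u, conj_mem_adOf hC hi hm hu, huk⟩

lemma IsBasedModule.reach_adOf_of_repr_smul_pos (hM : IsBasedModule BR v) {C : Finset ι}
    (hC : BR.IsStarMulClosed C) {i : ι} (hi : i ∈ C) {j j' k k' : κ}
    (hjj' : BR.Reach v (BR.adOf C) j j') (hjk : 0 < v.repr (BR.b i • v j) k)
    (hj'k' : 0 < v.repr (BR.b i • v j') k') : BR.Reach v (BR.adOf C) k k' := by
  induction hjj' generalizing k' with
  | refl =>
    refine .single (hM.step_adOf_of_conj hC hi (unit_mem_adOf hi) hjk ?_ hj'k')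
    simp [BR.b_unit]
  | tail _ hstep ih =>
    obtain ⟨m, hm, hpos⟩ := hstep
    obtain ⟨l, hl⟩ := hM.exists_repr_smul_pos i _
    exact (ih hl).tail (hM.step_adOf_of_conj hC hi hm hl hpos hj'k')

variable {f : R →+* ℝ} {μ : κ → ℝ}

lemma IsBasedModule.sum_sq_orbit_adOf_eq_of_repr_smul_pos (hM : IsBasedModule BR v)
    {C : Finset ι} (hC : BR.IsStarMulClosed C)
    (heig : ∀ (i : ι) (k : κ), ∑ j, (v.repr (BR.b i • v j) k : ℝ) * μ j = f (BR.b i) * μ k)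
    {i : ι} (hi : i ∈ C) (hfi : f (BR.b i) ≠ 0) {a b : κ} (hab : 0 < v.repr (BR.b i • v a) b) :
    ∑ k ∈ BR.orbit v (BR.adOf C) a, μ k ^ 2 = ∑ k ∈ BR.orbit v (BR.adOf C) b, μ k ^ 2 := by
  set A := BR.orbit v (BR.adOf C) a
  set B := BR.orbit v (BR.adOf C) b
  have hAB (j : κ) (hj : j ∈ A) (k : κ) (hk : 0 < v.repr (BR.b i • v j) k) : k ∈ B :=
    mem_orbit.2 (hM.reach_adOf_of_repr_smul_pos hC hi (mem_orbit.1 hj) hab hk)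
  have hBA (k : κ) (hk : k ∈ B) (j : κ) (hj : 0 < v.repr (BR.b i • v j) k) : j ∈ A :=
    mem_orbit.2 (hM.reach_adOf_of_repr_smul_pos hC (hC.star_mem i hi) (mem_orbit.1 hk)
      (hM.adj i a b ▸ hab) (hM.adj i j k ▸ hj))
  have hrestrict {s : Finset κ} {g : κ → ℤ} (hg : ∀ x, 0 ≤ g x) (hs : ∀ x, 0 < g x → x ∈ s) :
      ∑ x ∈ s, (g x : ℝ) * μ x = ∑ x, (g x : ℝ) * μ x :=
    Finset.sum_subset (Finset.subset_univ s) fun x _ hx => by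
      simp [le_antisymm (not_lt.1 fun h => hx (hs x h)) (hg x)]
  have hcol (k : κ) (hk : k ∈ B) :
      ∑ j ∈ A, (v.repr (BR.b i • v j) k : ℝ) * μ j = f (BR.b i) * μ k := by
    rw [hrestrict (fun j => hM.nonneg i j k) (hBA k hk), heig]
  have hrow (j : κ) (hj : j ∈ A) :
      ∑ k ∈ B, (v.repr (BR.b i • v j) k : ℝ) * μ k = f (BR.b i) * μ j := by
    rw [hrestrict (hM.nonneg i j) (hAB j hj), ← map_basis_star f i, ← heig]
    simp_rw [hM.adj i j]
  exact (mul_left_cancel₀ hfi (mul_sum_sq_eq_of_eigen hcol hrow)).symm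

lemma IsBasedModule.sum_sq_orbit_adOf_eq_of_reach (hM : IsBasedModule BR v)
    {C : Finset ι} (hC : BR.IsStarMulClosed C) (hf : ∀ i, f (BR.b i) ≠ 0)
    (heig : ∀ (i : ι) (k : κ), ∑ j, (v.repr (BR.b i • v j) k : ℝ) * μ j = f (BR.b i) * μ k)
    {a b : κ} (hab : BR.Reach v C a b) :
    ∑ k ∈ BR.orbit v (BR.adOf C) a, μ k ^ 2 = ∑ k ∈ BR.orbit v (BR.adOf C) b, μ k ^ 2 := by
  induction hab with
  | refl => rfl
  | tail _ hstep ih =>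
    obtain ⟨i, hi, hpos⟩ := hstep
    exact ih.trans (hM.sum_sq_orbit_adOf_eq_of_repr_smul_pos hC heig hi (hf i) hpos)

lemma IsBasedModule.sum_sq_orbit_eq_card_mul [DecidableEq κ] (hM : IsBasedModule BR v)
    {C : Finset ι} (hC : BR.IsStarMulClosed C) (hf : ∀ i, f (BR.b i) ≠ 0)
    (heig : ∀ (i : ι) (k : κ), ∑ j, (v.repr (BR.b i • v j) k : ℝ) * μ j = f (BR.b i) * μ k)
    (j : κ) :
    ∑ k ∈ BR.orbit v C j, μ k ^ 2 = ((BR.orbit v C j).image (BR.orbit v (BR.adOf C))).card *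
      ∑ k ∈ BR.orbit v (BR.adOf C) j, μ k ^ 2 := by
  have hfiber (x : κ) (hx : x ∈ BR.orbit v C j) :
      ∑ k ∈ BR.orbit v (BR.adOf C) j, μ k ^ 2 = ∑ y ∈ BR.orbit v C j with
        BR.orbit v (BR.adOf C) y = BR.orbit v (BR.adOf C) x, μ y ^ 2 := by
    rw [hM.sum_sq_orbit_adOf_eq_of_reach hC hf heig (mem_orbit.1 hx)]
    refine Finset.sum_congr (Finset.ext fun y => ?_) fun _ _ => rfl
    rw [Finset.mem_filter]
    constructor
    · intro hy
      exact ⟨mem_orbit.2 ((mem_orbit.1 hx).trans ((mem_orbit.1 hy).mono (adOf_subset hC))),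
        (hM.orbit_eq_of_reach (isStarMulClosed_adOf C).star_mem (mem_orbit.1 hy)).symm⟩
    · rintro ⟨-, hyx⟩
      rw [← hyx]
      exact mem_orbit.2 .refl
  rw [← Finset.sum_image' (f := fun _ => ∑ k ∈ BR.orbit v (BR.adOf C) j, μ k ^ 2) _ hfiber,
    Finset.sum_const, nsmul_eq_mul]

theorem IsBasedModule.exists_sum_sq_orbit_eq_mul (hM : IsBasedModule BR v)
    (hf : ∀ i, f (BR.b i) ≠ 0)
    (heig : ∀ (i : ι) (k : κ), ∑ j, (v.repr (BR.b i • v j) k : ℝ) * μ j = f (BR.b i) * μ k)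
    {n : ℕ} {C : Finset ι} (hC : BR.IsStarMulClosed C) (hn : BR.upperOf C n = {BR.unit})
    (j : κ) : ∃ m : ℤ, ∑ k ∈ BR.orbit v C j, μ k ^ 2 = m * μ j ^ 2 := by
  classical
  induction n generalizing C with
  | zero =>
    rw [show C = {BR.unit} from hn, orbit_singleton_unit]
    exact ⟨1, by simp⟩
  | succ n ih =>
    obtain ⟨m, hm⟩ := ih (isStarMulClosed_adOf C) (by rwa [← upperOf_succ'])
    refine ⟨((BR.orbit v C j).image (BR.orbit v (BR.adOf C))).card * m, ?_⟩
    rw [hM.sum_sq_orbit_eq_card_mul hC hf heig, hm]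
    push_cast
    ring

lemma orbit_univ_eq_univ_of_indecomposable
    (hindec : ∀ D : Set κ,
      (∀ (i : ι), ∀ j ∈ D, ∀ k : κ, 0 < v.repr (BR.b i • v j) k → k ∈ D) →
      D = ∅ ∨ D = Set.univ) (j : κ) :
    BR.orbit v Finset.univ j = Finset.univ := by
  rcases hindec {k | BR.Reach v Finset.univ j k}
    (fun i _ hj k hk => Relation.ReflTransGen.tail hj ⟨i, Finset.mem_univ i, hk⟩) with h | h
  · exact (Set.eq_empty_iff_forall_notMem.1 h j .refl).elim
  · ext k
    simp only [mem_orbit, Finset.mem_univ, iff_true]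
    exact Set.eq_univ_iff_forall.1 h k

end Module

end BasedRing

theorem fpdim_module_divisibility_general {ι R : Type*} [Fintype ι] [DecidableEq ι]
    [Ring R] (BR : BasedRing ι R)
    (hnil : ∃ n : ℕ, BR.upperOf Finset.univ n = {BR.unit})
    {κ M : Type*} [Fintype κ] [AddCommGroup M] [Module R M]
    (v : Module.Basis κ ℤ M)
    (hd_nonneg : ∀ (i : ι) (j k : κ), 0 ≤ v.repr (BR.b i • v j) k)
    (hd_adj : ∀ (i : ι) (j k : κ),
      v.repr (BR.b i • v j) k = v.repr (BR.b (BR.star i) • v k) j)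
    (hindec : ∀ D : Set κ,
      (∀ (i : ι), ∀ j ∈ D, ∀ k : κ, 0 < v.repr (BR.b i • v j) k → k ∈ D) →
      D = ∅ ∨ D = Set.univ)
    (f : R →+* ℝ) (hf : ∀ i, 0 < f (BR.b i))
    (μ : κ → ℝ)
    (heig : ∀ (i : ι) (k : κ),
      (∑ j : κ, ((v.repr (BR.b i • v j) k : ℤ) : ℝ) * μ j) = f (BR.b i) * μ k) :
    ∀ j : κ, ∃ m : ℤ, (∑ k : κ, (μ k) ^ 2) = (m : ℝ) * (μ j) ^ 2 := by
  intro j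
  obtain ⟨n, hn⟩ := hnil
  have hM : BR.IsBasedModule v := ⟨hd_nonneg, hd_adj⟩
  obtain ⟨m, hm⟩ := hM.exists_sum_sq_orbit_eq_mul (fun i => (hf i).ne') heig
    BR.isStarMulClosed_univ hn j
  rw [BR.orbit_univ_eq_univ_of_indecomposable hindec] at hm
  exact ⟨m, hm⟩

/-- Let `R` be a nilpotent based ring, `M` an indecomposable
based `R`-module with basis `{V_j}_{j∈κ}` (the action has nonnegative structure
constants `d_{ij}^k` satisfying `d_{ij}^k = d_{i*k}^j`, and no proper nonempty
subset of the basis spans an `R`-stable submodule), `f = FPdim : R → ℝ` the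
ring homomorphism positive on basic elements, and `(μ_j)` positive reals such
that `Q = Σ_j μ_j V_j` satisfies `X·Q = FPdim(X)·Q` for all `X ∈ R` (stated
coefficientwise). Then `FPdim(M)/FPdim(V_j)² = (Σ_k μ_k²)/μ_j²` is an integer
for every `j`. -/
theorem fpdim_module_divisibility {ι R : Type*} [Fintype ι] [DecidableEq ι]
    [Ring R] (BR : BasedRing ι R)
    (hnil : ∃ n : ℕ, BR.upperOf Finset.univ n = {BR.unit})
    {κ M : Type*} [Fintype κ] [DecidableEq κ] [AddCommGroup M] [Module R M]
    (v : Module.Basis κ ℤ M)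
    (hd_nonneg : ∀ (i : ι) (j k : κ), 0 ≤ v.repr (BR.b i • v j) k)
    (hd_adj : ∀ (i : ι) (j k : κ),
      v.repr (BR.b i • v j) k = v.repr (BR.b (BR.star i) • v k) j)
    (hindec : ∀ D : Set κ,
      (∀ (i : ι), ∀ j ∈ D, ∀ k : κ, 0 < v.repr (BR.b i • v j) k → k ∈ D) →
      D = ∅ ∨ D = Set.univ)
    (f : R →+* ℝ) (hf : ∀ i, 0 < f (BR.b i))
    (μ : κ → ℝ) (hμ : ∀ j, 0 < μ j)
    (heig : ∀ (i : ι) (k : κ),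
      (∑ j : κ, ((v.repr (BR.b i • v j) k : ℤ) : ℝ) * μ j) = f (BR.b i) * μ k) :
    ∀ j : κ, ∃ m : ℤ, (∑ k : κ, (μ k) ^ 2) = (m : ℝ) * (μ j) ^ 2 :=
  fpdim_module_divisibility_general BR hnil v hd_nonneg hd_adj hindec f hf μ heig
end

section
/- Let ι be a finite set with an involution i ↦ i*. Let d : ι → ℝ with d_i > 0 and d_{i*} = d_i for all i, let θ : ι → ℂ with |θ_i| = 1 for all i, let N : ι × ι × ι → ℕ (written N_{ab}^c), and let s : ι × ι → ℂ. Assume for all a, b ∈ ι: (i) s_{ab} = θ_a^{-1} θ_b^{-1} Σ_c N_{a*b}^c θ_c d_c; (ii) Σ_c N_{a*b}^c d_c = d_a d_b; (iii) s_{ab} = s_{ba}; (iv) s_{a*b} = conjugate of s_{ab}; and (v) the Verlinde identity s_{ka} s_{kb} / d_k = Σ_c N_{ab}^c s_{kc} holds for all k, a, b ∈ ι. Then for all i, k ∈ ι: one has s_{kj} = d_k d_j for every j with N_{ii*}^j ≠ 0 if and only if |s_{ik}| = d_i d_k. (This is the key lemma relating an object centralizing all constituents of X_i ⊗ X_i*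 to the condition |s_{ik}| = d_i d_k in a pseudounitary modular category.) -/
/-!
Balancing bounds `‖s_{ab}‖ ≤ d_a d_b` by the triangle inequality, since the twists have modulus one.
Verlinde's formula with `b = a*` expresses `‖s_{ki}‖²` as `d_k Σ_j N_{ii*}^j s_{kj}`, while
`d_k Σ_j N_{ii*}^j d_k d_j = (d_i d_k)²` by the dimension formula. So `‖s_{ik}‖ = d_i d_k` says
that a nonnegative combination of the `s_{kj}` reaches its largest possible value, which happens
exactly when every `s_{kj}` with positive weight attains its bound `d_k d_j`.
-/

open Finset

namespace Complex

theorem eq_ofReal_of_norm_le_of_le_re {z : ℂ} {b : ℝ} (hz : ‖z‖ ≤ b) (hb : b ≤ z.re) :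
    z = b := by
  have hre : z.re = b := le_antisymm ((re_le_norm z).trans hz) hb
  have him : z.im = 0 :=
    abs_re_eq_norm.1 <| le_antisymm (abs_re_le_norm z) (hz.trans (hre ▸ le_abs_self z.re))
  exact ext (by simp [hre]) (by simp [him])

theorem norm_sum_natCast_mul_le {ι : Type*} (t : Finset ι) (n : ι → ℕ) (θ : ι → ℂ)
    (hθ : ∀ c ∈ t, ‖θ c‖ = 1) (d : ι → ℝ) (hd : ∀ c ∈ t, 0 ≤ d c) :
    ‖∑ c ∈ t, (n c : ℂ) * θ c * d c‖ ≤ ∑ c ∈ t, (n c : ℝ) * d c :=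
  (norm_sum_le _ _).trans_eq <| sum_congr rfl fun c hc => by
    rw [norm_mul, norm_mul, hθ c hc, norm_natCast, norm_real, Real.norm_of_nonneg (hd c hc),
      mul_one]

theorem sum_mul_eq_sum_mul_iff_of_norm_le {ι : Type*} {t : Finset ι} {w b : ι → ℝ} {z : ι → ℂ}
    (hw : ∀ j ∈ t, 0 ≤ w j) (hz : ∀ j ∈ t, ‖z j‖ ≤ b j) :
    ∑ j ∈ t, (w j : ℂ) * z j = ∑ j ∈ t, (w j : ℂ) * b j ↔ ∀ j ∈ t, w j ≠ 0 → z j = b j := by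
  refine ⟨fun h j hj hwj => ?_, fun h => sum_congr rfl fun j hj => ?_⟩
  · have hre : ∑ j ∈ t, w j * (b j - (z j).re) = 0 := by
      have := congrArg re h
      simp only [re_sum, re_ofReal_mul, ofReal_re] at this
      simp only [mul_sub, sum_sub_distrib, this, sub_self]
    have hterm := (sum_eq_zero_iff_of_nonneg fun j hj =>
      mul_nonneg (hw j hj) (sub_nonneg.2 ((re_le_norm _).trans (hz j hj)))).1 hre j hj
    exact eq_ofReal_of_norm_le_of_le_re (hz j hj)
      (sub_nonpos.1 ((mul_eq_zero.1 hterm).resolve_left hwj).le)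
  · by_cases hwj : w j = 0
    · simp [hwj]
    · rw [h j hj hwj]

end Complex

/-- Numerical data abstracted from a pseudounitary modular
category: a finite index set `ι` with involution `i ↦ i*`, positive
star-invariant dimensions `d`, unit-modulus twists `θ`, fusion coefficients
`N_{ab}^c ∈ ℕ`, and an `S`-matrix `s` satisfying (i) the balancing formula
`s_{ab} = θ_a⁻¹ θ_b⁻¹ Σ_c N_{a*b}^c θ_c d_c`; (ii) `Σ_c N_{a*b}^c d_c = d_a d_b`;
(iii) `s_{ab} = s_{ba}`; (iv) `s_{a*b} = conj (s_{ab})`; (v) the Verlinde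
identity `s_{ka} s_{kb} / d_k = Σ_c N_{ab}^c s_{kc}`.  Then for all `i, k`:
`s_{kj} = d_k d_j` for every `j` with `N_{ii*}^j ≠ 0` if and only if
`|s_{ik}| = d_i d_k`. -/
theorem centralize_iff_abs_eq {ι : Type*} [Fintype ι]
    (star : ι → ι) (hstar : ∀ i, star (star i) = i)
    (d : ι → ℝ) (hd : ∀ i, 0 < d i) (hdstar : ∀ i, d (star i) = d i)
    (θ : ι → ℂ) (hθ : ∀ i, ‖θ i‖ = 1)
    (N : ι → ι → ι → ℕ) (s : ι → ι → ℂ)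
    (h1 : ∀ a b, s a b =
      (θ a)⁻¹ * (θ b)⁻¹ * ∑ c : ι, (N (star a) b c : ℂ) * θ c * (d c : ℂ))
    (h2 : ∀ a b, (∑ c : ι, (N (star a) b c : ℝ) * d c) = d a * d b)
    (h3 : ∀ a b, s a b = s b a)
    (h4 : ∀ a b, s (star a) b = (starRingEnd ℂ) (s a b))
    (h5 : ∀ k a b, s k a * s k b / (d k : ℂ) = ∑ c : ι, (N a b c : ℂ) * s k c) :
    ∀ i k, (∀ j, N i (star i) j ≠ 0 → s k j = (d k : ℂ) * (d j : ℂ)) ↔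
      ‖s i k‖ = d i * d k := by
  intro i k
  have hbound (j : ι) : ‖s k j‖ ≤ d k * d j := by
    rw [h1, norm_mul, norm_mul, norm_inv, norm_inv, hθ, hθ, inv_one, one_mul, one_mul, ← h2]
    exact Complex.norm_sum_natCast_mul_le _ _ _ (fun c _ => hθ c) _ (fun c _ => (hd c).le)
  have hdk : (d k : ℂ) ≠ 0 := Complex.ofReal_ne_zero.2 (hd k).ne'
  have hnormSq : ((‖s i k‖ ^ 2 : ℝ) : ℂ) = d k * ∑ j, (N i (star i) j : ℂ) * s k j := by
    have h := h5 k i (star i)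
    rw [h3 k (star i), h4, ← h3 k i, Complex.mul_conj', div_eq_iff hdk] at h
    push_cast
    rw [h3 i k, h, mul_comm]
  have hdim : ∑ j, (N i (star i) j : ℂ) * (d k * d j) = d k * (d i * d i) := by
    have h := h2 (star i) (star i)
    rw [hstar, hdstar] at h
    rw [← Complex.ofReal_mul, ← h]
    push_cast
    rw [mul_sum]
    exact sum_congr rfl fun j _ => by ring
  have hcentral := Complex.sum_mul_eq_sum_mul_iff_of_norm_le (t := univ) (z := s k)
    (w := fun j => (N i (star i) j : ℝ)) (fun j _ => Nat.cast_nonneg _) (fun j _ => hbound j)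
  simp only [mem_univ, forall_const, Nat.cast_ne_zero, Complex.ofReal_natCast,
    Complex.ofReal_mul] at hcentral
  rw [← hcentral, hdim, ← mul_right_inj' hdk, ← hnormSq,
    ← pow_left_inj₀ (norm_nonneg _) (mul_pos (hd i) (hd k)).le two_ne_zero]
  norm_cast
  ring_nf
end
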